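/- arXiv:2407.17135 — 3 statements merged into one kernel-verified Lean document; each statement's English description precedes it below -/
import Mathlib

section
/- Let (X, 𝒳) be a measurable space with finite atomless measure λ, let q_n → ∞ monotonically, let (C_n^k)_{k=1,…,K_n} be finite measurable partitions of X, and let E_{q_n} be Poisson point processes with intensity q_n λ. Let r_n → r ∈ [0, ∞) be monotone with √(K_n/q_n) ∈ o(r_n) and √(log n / q_n) ∈ o(r_n). Then (1/r_n) Σ_{k=1}^{K_n} |E_{q_n}(C_n^k)/q_n − λ(C_n^k)| → 0 almost surely as n → ∞. -/
/-!
With `p k = q λ(C k)`, the sum `∑ k |N k - p k|` is the largest of the `3 ^ K` signed sums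
`∑ k s k (N k - p k)`, `s k ∈ {-1, 0, 1}`. The Poisson moment generating function
`exp (p (e^t - 1))` and `e^v - 1 - v ≤ v^2` for `|v| ≤ 1` give a Chernoff bound
`exp (-a^2 / 4m)` for each signed sum exceeding `a`, where `m ≥ ∑ p k` and `a ≤ 2m`. At level
`a = ε r_n q_n` the union bound is `3^(K_n) exp (-c ε² q_n r_n²)`, which is `O(n⁻²)` because
`K_n` and `log n` are `o(q_n r_n²)`; Borel–Cantelli over `n` and a countable family of `ε`
conclude.
-/

open MeasureTheory ProbabilityTheory Filter Topology Real
open scoped NNReal Nat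

theorem hasSum_poissonMeasure_mul_exp (r : ℝ≥0) (t : ℝ) :
    HasSum (fun n : ℕ => exp (-r) * r ^ n / n ! * exp (t * n)) (exp (r * (exp t - 1))) := by
  have h := (NormedSpace.expSeries_div_hasSum_exp ((r : ℝ) * exp t)).mul_left (exp (-r))
  rw [← exp_eq_exp_ℝ, ← exp_add] at h
  have hf : (fun n : ℕ => exp (-r) * r ^ n / n ! * exp (t * n))
      = fun n : ℕ => exp (-r) * ((r * exp t) ^ n / n !) := by
    ext n
    rw [mul_pow, ← exp_nat_mul, mul_comm t]
    ring
  rwa [hf, mul_sub, mul_one, ← neg_add_eq_sub]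

theorem integrable_exp_mul_poissonMeasure (r : ℝ≥0) (t : ℝ) :
    Integrable (fun n : ℕ => exp (t * n)) (poissonMeasure r) := by
  rw [integrable_poissonMeasure_iff]
  simpa only [norm_of_nonneg (exp_nonneg _)] using (hasSum_poissonMeasure_mul_exp r t).summable

theorem mgf_natCast_poissonMeasure (r : ℝ≥0) (t : ℝ) :
    mgf (fun n : ℕ => (n : ℝ)) (poissonMeasure r) t = exp (r * (exp t - 1)) := by
  rw [mgf, integral_poissonMeasure]
  exact (hasSum_poissonMeasure_mul_exp r t).tsum_eq

section PoissonVariable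

variable {Ω : Type*} [MeasurableSpace Ω] {P : Measure Ω} {N : Ω → ℕ} {r : ℝ≥0}

theorem integrable_exp_mul_of_map_eq_poissonMeasure (hN : Measurable N)
    (hlaw : P.map N = poissonMeasure r) (t : ℝ) :
    Integrable (fun ω => exp (t * N ω)) P := by
  have h := integrable_exp_mul_poissonMeasure r t
  rw [← hlaw] at h
  exact h.comp_measurable hN

theorem integrable_exp_mul_const_mul_sub_of_map_eq_poissonMeasure (hN : Measurable N)
    (hlaw : P.map N = poissonMeasure r) (c t : ℝ) :
    Integrable (fun ω => exp (t * (c * (N ω - r)))) P := by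
  refine ((integrable_exp_mul_of_map_eq_poissonMeasure hN hlaw (t * c)).const_mul
    (exp (-(t * c * r)))).congr (ae_of_all _ fun ω => ?_)
  simp only [← exp_add]
  ring_nf

theorem mgf_const_mul_sub_of_map_eq_poissonMeasure (hN : Measurable N)
    (hlaw : P.map N = poissonMeasure r) (c t : ℝ) :
    mgf (fun ω => c * (N ω - r)) P t = exp (r * (exp (c * t) - 1 - c * t)) := by
  have hmgf : mgf (fun ω => (N ω : ℝ)) P (c * t) = exp (r * (exp (c * t) - 1)) := by
    rw [← mgf_natCast_poissonMeasure, ← hlaw, mgf_map hN.aemeasurable .of_discrete]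
    rfl
  simp_rw [mgf_const_mul, sub_eq_add_neg, mgf_add_const, hmgf, ← exp_add]
  ring_nf

end PoissonVariable

section Chernoff

variable {Ω ι : Type*} [MeasurableSpace Ω] {P : Measure Ω} [IsFiniteMeasure P] [Fintype ι]
  {N : ι → Ω → ℕ} {p : ι → ℝ≥0}

theorem measureReal_le_sum_mul_sub_le_exp (hN : ∀ k, Measurable (N k))
    (hlaw : ∀ k, P.map (N k) = poissonMeasure (p k)) (hindep : iIndepFun N P)
    {σ : ι → ℝ} (hσ : ∀ k, |σ k| ≤ 1) (a : ℝ) {θ : ℝ} (hθ0 : 0 ≤ θ) (hθ1 : θ ≤ 1) :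
    P.real {ω | a ≤ ∑ k, σ k * ((N k ω : ℝ) - p k)}
      ≤ exp (-(θ * a) + θ ^ 2 * ∑ k, (p k : ℝ)) := by
  set X : ι → Ω → ℝ := fun k ω => σ k * ((N k ω : ℝ) - p k)
  have hXmeas : ∀ k, Measurable (X k) := fun k =>
    (measurable_from_top (f := fun x : ℕ => σ k * ((x : ℝ) - p k))).comp (hN k)
  have hXindep : iIndepFun X P :=
    hindep.comp (fun k (x : ℕ) => σ k * ((x : ℝ) - p k)) fun k => measurable_from_top
  have hint : Integrable (fun ω => exp (θ * (∑ k, X k) ω)) P :=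
    hXindep.integrable_exp_mul_sum hXmeas fun k _ =>
      integrable_exp_mul_const_mul_sub_of_map_eq_poissonMeasure (hN k) (hlaw k) (σ k) θ
  have hmgf : mgf (∑ k, X k) P θ = exp (∑ k, (p k : ℝ) * (exp (σ k * θ) - 1 - σ k * θ)) := by
    rw [hXindep.mgf_sum hXmeas, exp_sum]
    exact Finset.prod_congr rfl fun k _ =>
      mgf_const_mul_sub_of_map_eq_poissonMeasure (hN k) (hlaw k) (σ k) θ
  have hterm : ∀ k, (p k : ℝ) * (exp (σ k * θ) - 1 - σ k * θ) ≤ θ ^ 2 * p k := fun k => by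
    have hv : |σ k * θ| ≤ 1 := by
      rw [abs_mul, abs_of_nonneg hθ0]
      exact mul_le_one₀ (hσ k) hθ0 hθ1
    have hsq : (σ k * θ) ^ 2 ≤ θ ^ 2 := by
      rw [mul_pow, ← sq_abs]
      exact mul_le_of_le_one_left (sq_nonneg θ) (pow_le_one₀ (abs_nonneg _) (hσ k))
    have := (le_abs_self _).trans (abs_exp_sub_one_sub_id_le hv)
    nlinarith [(p k).2]
  calc P.real {ω | a ≤ ∑ k, σ k * ((N k ω : ℝ) - p k)}
      = P.real {ω | a ≤ (∑ k, X k) ω} := by simp only [X, Finset.sum_apply]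
    _ ≤ exp (-θ * a) * mgf (∑ k, X k) P θ := measure_ge_le_exp_mul_mgf a hθ0 hint
    _ ≤ exp (-(θ * a) + θ ^ 2 * ∑ k, (p k : ℝ)) := by
      rw [hmgf, ← exp_add, Finset.mul_sum, neg_mul]
      exact exp_le_exp.2 (add_le_add_right (Finset.sum_le_sum fun k _ => hterm k) _)

theorem measureReal_lt_sum_abs_sub_le_three_pow_mul_exp (hN : ∀ k, Measurable (N k))
    (hlaw : ∀ k, P.map (N k) = poissonMeasure (p k)) (hindep : iIndepFun N P)
    {a m : ℝ} (ha : 0 ≤ a) (ham : a ≤ 2 * m) (hpm : ∑ k, (p k : ℝ) ≤ m) :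
    P.real {ω | a < ∑ k, |(N k ω : ℝ) - p k|}
      ≤ 3 ^ Fintype.card ι * exp (-(a ^ 2 / (4 * m))) := by
  classical
  have hm : 0 ≤ m := (Finset.sum_nonneg fun k _ => (p k).2).trans hpm
  set θ := a / (2 * m)
  have hexp : -(θ * a) + θ ^ 2 * ∑ k, (p k : ℝ) ≤ -(a ^ 2 / (4 * m)) := by
    rcases hm.eq_or_lt with rfl | hm
    · simp [θ]
    calc -(θ * a) + θ ^ 2 * ∑ k, (p k : ℝ) ≤ -(θ * a) + θ ^ 2 * m := by gcongr
      _ = -(a ^ 2 / (4 * m)) := by simp only [θ]; field_simp; ring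
  have hcover : {ω | a < ∑ k, |(N k ω : ℝ) - p k|}
      ⊆ ⋃ s : ι → SignType, {ω | a ≤ ∑ k, (s k : ℝ) * ((N k ω : ℝ) - p k)} := fun ω hω =>
    Set.mem_iUnion.2 ⟨fun k => SignType.sign ((N k ω : ℝ) - p k), by
      simpa only [Set.mem_ofPred_eq, sign_mul_self] using hω.le⟩
  have hsign : ∀ (s : ι → SignType) k, |(s k : ℝ)| ≤ 1 := fun s k => by
    cases s k <;> simp
  calc P.real {ω | a < ∑ k, |(N k ω : ℝ) - p k|}
      ≤ ∑ s : ι → SignType, P.real {ω | a ≤ ∑ k, (s k : ℝ) * ((N k ω : ℝ) - p k)} :=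
        (measureReal_mono hcover).trans (measureReal_iUnion_fintype_le _)
    _ ≤ ∑ _s : ι → SignType, exp (-(a ^ 2 / (4 * m))) :=
        Finset.sum_le_sum fun s _ =>
          (measureReal_le_sum_mul_sub_le_exp hN hlaw hindep (hsign s) a (by positivity)
            (div_le_one_of_le₀ ham (by positivity))).trans (exp_le_exp.2 hexp)
    _ = 3 ^ Fintype.card ι * exp (-(a ^ 2 / (4 * m))) := by
        simp [show Fintype.card SignType = 3 from rfl]

theorem measureReal_lt_mul_sum_abs_div_sub_le_three_pow_mul_exp {w : ι → ℝ≥0} {q : ℝ≥0}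
    (hN : ∀ k, Measurable (N k))
    (hlaw : ∀ k, P.map (N k) = poissonMeasure (q * w k)) (hindep : iIndepFun N P) (hq : 0 < q)
    {r R L ε : ℝ} (hr : 0 < r) (hrR : r ≤ R) (hwL : ∑ k, (w k : ℝ) ≤ L) (hε : 0 < ε) :
    P.real {ω | ε < 1 / r * ∑ k, |(N k ω : ℝ) / q - w k|}
      ≤ 3 ^ Fintype.card ι * exp (-(ε ^ 2 / (4 * (L + ε * R)) * (q * r ^ 2))) := by
  have hq' : (0 : ℝ) < q := hq
  have hL : 0 ≤ L := (Finset.sum_nonneg fun k _ => (w k).2).trans hwL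
  have hset : {ω | ε < 1 / r * ∑ k, |(N k ω : ℝ) / q - w k|}
      = {ω | ε * r * q < ∑ k, |(N k ω : ℝ) - ↑(q * w k)|} := by
    ext ω
    have hsum : ∑ k, |(N k ω : ℝ) - ↑(q * w k)| = q * ∑ k, |(N k ω : ℝ) / q - w k| := by
      rw [Finset.mul_sum]
      refine Finset.sum_congr rfl fun k _ => ?_
      rw [NNReal.coe_mul, ← abs_of_pos hq', ← abs_mul, abs_of_pos hq', mul_sub,
        mul_div_cancel₀ _ hq'.ne']
    simp only [Set.mem_ofPred_eq, hsum]
    rw [one_div_mul_eq_div, lt_div_iff₀ hr, mul_comm (q : ℝ), mul_lt_mul_iff_left₀ hq']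
  rw [hset]
  refine (measureReal_lt_sum_abs_sub_le_three_pow_mul_exp hN hlaw hindep (m := q * (L + ε * R))
    (by positivity) ?_ ?_).trans_eq ?_
  · have hR : 0 ≤ R := hr.le.trans hrR
    nlinarith [mul_le_mul_of_nonneg_left hrR (mul_nonneg hε.le hq'.le), mul_nonneg hq'.le hL,
      mul_nonneg (mul_nonneg hq'.le hε.le) hR]
  · simp only [NNReal.coe_mul, ← Finset.mul_sum]
    gcongr
    nlinarith
  · congr 2
    field_simp

end Chernoff

theorem tendsto_div_mul_sq_of_tendsto_sqrt_div {x q r : ℕ → ℝ} (hx : ∀ n, 0 ≤ x n / q n)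
    (h : Tendsto (fun n => √(x n / q n) / r n) atTop (𝓝 0)) :
    Tendsto (fun n => x n / (q n * r n ^ 2)) atTop (𝓝 0) := by
  simpa [div_pow, sq_sqrt (hx _), div_div] using h.pow 2

theorem summable_pow_mul_exp_neg {K : ℕ → ℕ} {u : ℕ → ℝ} {b δ : ℝ} (hb : 0 < b) (hδ : 0 < δ)
    (hu : ∀ n, 0 < u n) (hK : Tendsto (fun n => K n / u n) atTop (𝓝 0))
    (hlog : Tendsto (fun n : ℕ => log n / u n) atTop (𝓝 0)) :
    Summable fun n => b ^ K n * exp (-(δ * u n)) := by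
  have hK' : ∀ᶠ n in atTop, K n * |log b| < δ / 2 * u n := by
    have h : Tendsto (fun n => K n / u n * |log b|) atTop (𝓝 0) := by
      simpa using hK.mul_const |log b|
    filter_upwards [h.eventually_lt_const (half_pos hδ)] with n hn
    rwa [div_mul_eq_mul_div, div_lt_iff₀ (hu n)] at hn
  have hlog' : ∀ᶠ n : ℕ in atTop, 2 * log n < δ / 2 * u n := by
    have h : Tendsto (fun n : ℕ => 2 * (log n / u n)) atTop (𝓝 0) := by
      simpa using hlog.const_mul 2
    filter_upwards [h.eventually_lt_const (half_pos hδ)] with n hn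
    rwa [← mul_div_assoc, div_lt_iff₀ (hu n)] at hn
  refine .of_norm_bounded_eventually_nat (summable_one_div_nat_pow.2 one_lt_two) ?_
  filter_upwards [hK', hlog', eventually_ge_atTop 1] with n hKn hlogn hn
  have hn0 : (0 : ℝ) < n := by exact_mod_cast hn
  rw [norm_of_nonneg (by positivity)]
  calc b ^ K n * exp (-(δ * u n)) = exp (K n * log b - δ * u n) := by
        rw [sub_eq_add_neg, exp_add, exp_nat_mul, exp_log hb]
    _ ≤ exp (-(2 * log n)) := by
        have := mul_le_mul_of_nonneg_left (le_abs_self (log b)) (Nat.cast_nonneg (K n))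
        exact exp_le_exp.2 (by linarith)
    _ = 1 / n ^ 2 := by
        rw [exp_neg, two_mul, exp_add, exp_log hn0, one_div, sq]

theorem ae_eventually_notMem_of_summable_measureReal {α : Type*} [MeasurableSpace α]
    {μ : Measure α} [IsFiniteMeasure μ] {s : ℕ → Set α} (hs : Summable fun n => μ.real (s n)) :
    ∀ᵐ x ∂μ, ∀ᶠ n in atTop, x ∉ s n := by
  refine ae_eventually_notMem ?_
  have h : ∑' n, μ (s n) = ENNReal.ofReal (∑' n, μ.real (s n)) := by
    rw [ENNReal.ofReal_tsum_of_nonneg (fun n => measureReal_nonneg) hs]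
    exact tsum_congr fun n => (ofReal_measureReal).symm
  exact h ▸ ENNReal.ofReal_ne_top

theorem ae_tendsto_zero_of_forall_ae_eventually_le {Ω : Type*} [MeasurableSpace Ω]
    {μ : Measure Ω} {f : ℕ → Ω → ℝ} (hf : ∀ n ω, 0 ≤ f n ω)
    (h : ∀ ε > 0, ∀ᵐ ω ∂μ, ∀ᶠ n in atTop, f n ω ≤ ε) :
    ∀ᵐ ω ∂μ, Tendsto (fun n => f n ω) atTop (𝓝 0) := by
  have h' : ∀ᵐ ω ∂μ, ∀ m : ℕ, ∀ᶠ n in atTop, f n ω ≤ 1 / (m + 1) :=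
    ae_all_iff.2 fun m => h _ Nat.one_div_pos_of_nat
  filter_upwards [h'] with ω hω
  refine tendsto_order.2 ⟨fun a ha => .of_forall fun n => ha.trans_le (hf n ω), fun a ha => ?_⟩
  obtain ⟨m, hm⟩ := exists_nat_one_div_lt ha
  exact (hω m).mono fun n hn => hn.trans_lt hm

theorem stmt_3_general {X : Type*} [MeasurableSpace X] (lam : Measure X)
    [IsFiniteMeasure lam]
    {Ω : Type*} [MeasurableSpace Ω] (P : Measure Ω) [IsProbabilityMeasure P]
    (q : ℕ → NNReal) (hqpos : ∀ n, 0 < q n)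
    (K : ℕ → ℕ) (C : ∀ n, Fin (K n) → Set X)
    (hCmeas : ∀ n k, MeasurableSet (C n k))
    (hCdisj : ∀ n, Pairwise (Function.onFun Disjoint (C n)))
    (N : ∀ n, Fin (K n) → Ω → ℕ) (hNmeas : ∀ n k, Measurable (N n k))
    (hlaw : ∀ n k, Measure.map (N n k) P = poissonMeasure (q n * (lam (C n k)).toNNReal))
    (hindep : ∀ n, iIndepFun (N n) P)
    (r : ℕ → ℝ) (hrpos : ∀ n, 0 < r n) (rlim : ℝ)
    (hrtendsto : Tendsto r atTop (𝓝 rlim))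
    (hK : Tendsto (fun n => Real.sqrt ((K n : ℝ) / (q n : ℝ)) / r n) atTop (𝓝 0))
    (hlog : Tendsto (fun n : ℕ => Real.sqrt (Real.log (n : ℝ) / (q n : ℝ)) / r n) atTop (𝓝 0)) :
    ∀ᵐ ω ∂P,
      Tendsto (fun n =>
          (1 / r n) * ∑ k, |(N n k ω : ℝ) / (q n : ℝ) - (lam (C n k)).toReal|)
        atTop (𝓝 0) := by
  obtain ⟨R, hR⟩ := hrtendsto.bddAbove_range
  have hrR : ∀ n, r n ≤ R := fun n => hR ⟨n, rfl⟩
  have hCL : ∀ n, ∑ k, lam.real (C n k) ≤ lam.real Set.univ := fun n =>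
    sum_measureReal_le_measureReal_univ (fun k _ => hCmeas n k) ((hCdisj n).set_pairwise _)
  have hKu := tendsto_div_mul_sq_of_tendsto_sqrt_div (fun n => by positivity) hK
  have hlogu := tendsto_div_mul_sq_of_tendsto_sqrt_div
    (fun n => div_nonneg (log_natCast_nonneg n) (q n).2) hlog
  refine ae_tendsto_zero_of_forall_ae_eventually_le (fun n ω => mul_nonneg
    (one_div_nonneg.2 (hrpos n).le) (Finset.sum_nonneg fun k _ => abs_nonneg _)) fun ε hε => ?_
  have hδ : 0 < ε ^ 2 / (4 * (lam.real Set.univ + ε * R)) := by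
    have := (hrpos 0).trans_le (hrR 0)
    positivity
  have hsummable := summable_pow_mul_exp_neg three_pos hδ
    (fun n => mul_pos (hqpos n) (pow_pos (hrpos n) 2)) hKu hlogu
  filter_upwards [ae_eventually_notMem_of_summable_measureReal
    (hsummable.of_nonneg_of_le (fun n => measureReal_nonneg) fun n =>
      (measureReal_lt_mul_sum_abs_div_sub_le_three_pow_mul_exp (hNmeas n) (hlaw n) (hindep n)
        (hqpos n) (hrpos n) (hrR n) (hCL n) hε).trans_eq (by rw [Fintype.card_fin]; rfl))]
    with ω hω
  exact hω.mono fun n hn => not_lt.1 hn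

/-- Almost sure convergence of Poisson point processes (independent-setting case):
given a finite atomless intensity `λ`, monotone `q_n → ∞`, finite measurable
partitions `(C_n^k)_k` of `X`, and Poisson point processes `E_{q_n}` with
intensity `q_n λ` (encoded by their values `N n k` on the partition cells, which
are independent Poisson variables with parameters `q_n λ(C_n^k)`), if
`r_n → r ∈ [0,∞)` monotonically with `√(K_n/q_n) ∈ o(r_n)` and
`√(log n / q_n) ∈ o(r_n)`, then
`(1/r_n) Σ_k |N_n(C_n^k)/q_n − λ(C_n^k)| → 0` almost surely. -/
theorem stmt_3 {X : Type*} [MeasurableSpace X] (lam : Measure X)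
    [IsFiniteMeasure lam] [NullSingletonClass lam]
    {Ω : Type*} [MeasurableSpace Ω] (P : Measure Ω) [IsProbabilityMeasure P]
    (q : ℕ → NNReal) (hqpos : ∀ n, 0 < q n)
    (hqmono : Monotone fun n => (q n : ℝ))
    (hqtop : Tendsto (fun n => (q n : ℝ)) atTop atTop)
    (K : ℕ → ℕ) (C : ∀ n, Fin (K n) → Set X)
    (hCmeas : ∀ n k, MeasurableSet (C n k))
    (hCdisj : ∀ n, Pairwise (Function.onFun Disjoint (C n)))
    (hCcover : ∀ n, (⋃ k, C n k) = Set.univ)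
    (N : ∀ n, Fin (K n) → Ω → ℕ) (hNmeas : ∀ n k, Measurable (N n k))
    (hlaw : ∀ n k, Measure.map (N n k) P = poissonMeasure (q n * (lam (C n k)).toNNReal))
    (hindep : ∀ n, iIndepFun (N n) P)
    (r : ℕ → ℝ) (hrpos : ∀ n, 0 < r n) (rlim : ℝ) (hrlim : 0 ≤ rlim)
    (hrmono : Monotone r ∨ Antitone r)
    (hrtendsto : Tendsto r atTop (𝓝 rlim))
    (hK : Tendsto (fun n => Real.sqrt ((K n : ℝ) / (q n : ℝ)) / r n) atTop (𝓝 0))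
    (hlog : Tendsto (fun n : ℕ => Real.sqrt (Real.log (n : ℝ) / (q n : ℝ)) / r n) atTop (𝓝 0)) :
    ∀ᵐ ω ∂P,
      Tendsto (fun n =>
          (1 / r n) * ∑ k, |(N n k ω : ℝ) / (q n : ℝ) - (lam (C n k)).toReal|)
        atTop (𝓝 0) :=
  stmt_3_general lam P q hqpos K C hCmeas hCdisj N hNmeas hlaw hindep r hrpos rlim hrtendsto hK hlog
end

section
/- Let X be a bounded metric space with Assouad dimension strictly less than a, meaning every ball of diameter r can be covered by at most C(r/s)^{ã} balls of diameter s < r for some ã < a and C ≥ 1. Then for any decreasing sequence s_n → 0 there exists a nested sequence of finite Borel partitions (C_n^k)_{k=1,…,K_n} of X with diam(C_n^k) ≤ s_n for all k and K_n ≲ s_n^{−b} for any b ∈ (ã, a). Nested means each C_{n+1}^k is contained in exactly one C_n^{k'}. -/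
open Metric Filter Topology

/-- A good partition at scale `d`: finitely many measurable nonempty pairwise
disjoint sets of diameter at most `d` covering the space. -/
def GoodPart {X : Type*} [MetricSpace X] [MeasurableSpace X] (d : ℝ) (Q : Finset (Set X)) : Prop :=
  (∀ A ∈ Q, MeasurableSet A) ∧ (∀ A ∈ Q, A.Nonempty) ∧
  (Q : Set (Set X)).PairwiseDisjoint id ∧ ⋃₀ (Q : Set (Set X)) = Set.univ ∧
  ∀ A ∈ Q, diam A ≤ d

lemma piece_part {X : Type*} [MetricSpace X] [MeasurableSpace X] [BorelSpace X]
    (atil Cc : ℝ)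
    (hcover : ∀ (x : X) (r s : ℝ), 0 < s → s < r →
      ∃ Y : Finset X, (Y.card : ℝ) ≤ Cc * (r / s) ^ atil ∧
        closedBall x (r / 2) ⊆ ⋃ y ∈ Y, closedBall y (s / 2))
    (E : Set X) (hE : MeasurableSet E) (hEne : E.Nonempty) (hEb : Bornology.IsBounded E)
    (d d' : ℝ) (hd' : 0 < d') (hdd : d' ≤ d) (hdiam : Metric.diam E ≤ d) :
    ∃ F : Finset (Set X), (F.card : ℝ) ≤ Cc * (2 * d / d') ^ atil ∧
      (∀ A ∈ F, MeasurableSet A) ∧ (∀ A ∈ F, A.Nonempty) ∧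
      (∀ A ∈ F, A ⊆ E) ∧ (∀ A ∈ F, Metric.diam A ≤ d') ∧
      (F : Set (Set X)).PairwiseDisjoint id ∧ ⋃₀ (F : Set (Set X)) = E := by
  classical
  obtain ⟨x, hx⟩ := hEne
  have hd : 0 < d := lt_of_lt_of_le hd' hdd
  obtain ⟨Y, hYcard, hYcover⟩ := hcover x (2 * d) d' hd' (by linarith)
  have hEball : E ⊆ closedBall x d := fun y hy =>
    mem_closedBall.2 ((dist_le_diam_of_mem hEb hy hx).trans hdiam)
  have h2d : (2 : ℝ) * d / 2 = d := by ring
  rw [h2d] at hYcover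
  set l := Y.toList with hl
  set f : ℕ → Set X := fun i => if h : i < l.length then E ∩ closedBall (l.get ⟨i, h⟩) (d' / 2) else ∅ with hf
  have hfE : ∀ i, f i ⊆ E := by
    intro i
    simp only [hf]
    split
    · exact Set.inter_subset_left
    · exact Set.empty_subset _
  have hfU : ⋃ i, f i = E := by
    apply Set.Subset.antisymm (Set.iUnion_subset hfE)
    intro y hy
    have := hYcover (hEball hy)
    simp only [Set.mem_iUnion] at this
    obtain ⟨z, hzY, hz⟩ := this
    obtain ⟨i, hi⟩ := List.mem_iff_get.1 (Finset.mem_toList.2 hzY)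
    refine Set.mem_iUnion.2 ⟨i, ?_⟩
    simp only [hf]
    rw [dif_pos i.2]
    exact ⟨hy, by rw [hi]; exact hz⟩
  have hfmeas : ∀ i, MeasurableSet (f i) := by
    intro i
    simp only [hf]
    split
    · exact hE.inter measurableSet_closedBall
    · exact MeasurableSet.empty
  set g := disjointed f with hg
  set F : Finset (Set X) :=
    ((Finset.range l.length).image g).filter (fun A => A.Nonempty) with hF
  refine ⟨F, ?_, ?_, ?_, ?_, ?_, ?_, ?_⟩
  · calc (F.card : ℝ) ≤ ((Finset.range l.length).image g).card := by
          exact_mod_cast Finset.card_le_card (Finset.filter_subset _ _)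
      _ ≤ (Finset.range l.length).card := by exact_mod_cast Finset.card_image_le
      _ = Y.card := by simp [hl]
      _ ≤ Cc * (2 * d / d') ^ atil := hYcard
  · intro A hA
    obtain ⟨i, -, rfl⟩ := Finset.mem_image.1 (Finset.mem_filter.1 hA).1
    exact MeasurableSet.disjointed hfmeas i
  · intro A hA
    exact (Finset.mem_filter.1 hA).2
  · intro A hA
    obtain ⟨i, -, rfl⟩ := Finset.mem_image.1 (Finset.mem_filter.1 hA).1
    exact (disjointed_subset f i).trans (hfE i)
  · intro A hA
    obtain ⟨i, -, rfl⟩ := Finset.mem_image.1 (Finset.mem_filter.1 hA).1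
    by_cases h : i < l.length
    · have hsub : g i ⊆ closedBall (l.get ⟨i, h⟩) (d' / 2) := by
        refine (disjointed_subset f i).trans ?_
        simp only [hf]; rw [dif_pos h]; exact Set.inter_subset_right
      calc diam (g i) ≤ diam (closedBall (l.get ⟨i, h⟩) (d' / 2)) :=
            diam_mono hsub isBounded_closedBall
        _ ≤ 2 * (d' / 2) := diam_closedBall (by positivity)
        _ = d' := by ring
    · have : g i = ∅ := by
        have : f i = ∅ := by simp only [hf]; rw [dif_neg h]
        exact Set.eq_empty_of_subset_empty (this ▸ disjointed_subset f i)
      rw [this]; simpa using hd'.le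
  · intro A hA B hB hAB
    obtain ⟨i, -, rfl⟩ := Finset.mem_image.1 (Finset.mem_filter.1 (by exact_mod_cast hA)).1
    obtain ⟨j, -, rfl⟩ := Finset.mem_image.1 (Finset.mem_filter.1 (by exact_mod_cast hB)).1
    have hij : i ≠ j := fun h => hAB (by rw [h])
    exact disjoint_disjointed f hij
  · apply Set.Subset.antisymm
    · intro y hy
      obtain ⟨A, hA, hyA⟩ := hy
      obtain ⟨i, -, rfl⟩ := Finset.mem_image.1 (Finset.mem_filter.1 (by exact_mod_cast hA)).1
      exact (disjointed_subset f i).trans (hfE i) hyA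
    · intro y hy
      have : y ∈ ⋃ i, g i := by rw [hg, iUnion_disjointed, hfU]; exact hy
      obtain ⟨i, hi⟩ := Set.mem_iUnion.1 this
      have hilt : i < l.length := by
        by_contra h
        have : f i = ∅ := by simp only [hf]; rw [dif_neg h]
        exact absurd (disjointed_subset f i hi) (by rw [this]; exact id)
      refine ⟨g i, ?_, hi⟩
      have : g i ∈ F := Finset.mem_filter.2 ⟨Finset.mem_image.2 ⟨i, Finset.mem_range.2 hilt, rfl⟩, ⟨y, hi⟩⟩
      exact_mod_cast this

lemma refine_part {X : Type*} [MetricSpace X] [MeasurableSpace X] [BorelSpace X]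
    (hXbdd : Bornology.IsBounded (Set.univ : Set X))
    (atil Cc : ℝ)
    (hcover : ∀ (x : X) (r s : ℝ), 0 < s → s < r →
      ∃ Y : Finset X, (Y.card : ℝ) ≤ Cc * (r / s) ^ atil ∧
        closedBall x (r / 2) ⊆ ⋃ y ∈ Y, closedBall y (s / 2))
    (d d' : ℝ) (hd' : 0 < d') (hdd : d' ≤ d)
    (Q : Finset (Set X)) (hQ : GoodPart d Q) :
    ∃ Q' : Finset (Set X), GoodPart d' Q' ∧ (∀ A ∈ Q', ∃ E ∈ Q, A ⊆ E) ∧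
      (Q'.card : ℝ) ≤ Q.card * (Cc * (2 * d / d') ^ atil) := by
  classical
  obtain ⟨hmeas, hne, hdisj, hunion, hdiam⟩ := hQ
  have hstep : ∀ E : {A // A ∈ Q}, ∃ F : Finset (Set X),
      (F.card : ℝ) ≤ Cc * (2 * d / d') ^ atil ∧
      (∀ A ∈ F, MeasurableSet A) ∧ (∀ A ∈ F, A.Nonempty) ∧
      (∀ A ∈ F, A ⊆ E.1) ∧ (∀ A ∈ F, Metric.diam A ≤ d') ∧
      (F : Set (Set X)).PairwiseDisjoint id ∧ ⋃₀ (F : Set (Set X)) = E.1 := by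
    rintro ⟨E, hE⟩
    exact piece_part atil Cc hcover E (hmeas E hE) (hne E hE)
      (hXbdd.subset (Set.subset_univ E)) d d' hd' hdd (hdiam E hE)
  choose F hFcard hFmeas hFne hFsub hFdiam hFdisj hFunion using hstep
  set Q' : Finset (Set X) := Q.attach.biUnion F with hQ'
  have hmem : ∀ A ∈ Q', ∃ E : {A // A ∈ Q}, A ∈ F E := by
    intro A hA
    obtain ⟨E, -, hAE⟩ := Finset.mem_biUnion.1 hA
    exact ⟨E, hAE⟩
  refine ⟨Q', ⟨?_, ?_, ?_, ?_, ?_⟩, ?_, ?_⟩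
  · intro A hA; obtain ⟨E, hAE⟩ := hmem A hA; exact hFmeas E A hAE
  · intro A hA; obtain ⟨E, hAE⟩ := hmem A hA; exact hFne E A hAE
  · intro A hA B hB hAB
    obtain ⟨E, hAE⟩ := hmem A (by exact_mod_cast hA)
    obtain ⟨E', hBE⟩ := hmem B (by exact_mod_cast hB)
    by_cases hEE : E = E'
    · subst hEE; exact hFdisj E (by exact_mod_cast hAE) (by exact_mod_cast hBE) hAB
    · have hEE' : (E : Set X) ≠ (E' : Set X) := fun h => hEE (Subtype.ext h)
      have hdisjE : Disjoint (E : Set X) (E' : Set X) :=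
        hdisj (by exact_mod_cast E.2) (by exact_mod_cast E'.2) hEE'
      exact Set.disjoint_of_subset (hFsub E A hAE) (hFsub E' B hBE) hdisjE
  · apply Set.Subset.antisymm (Set.subset_univ _)
    intro x _hx
    have : x ∈ ⋃₀ (Q : Set (Set X)) := by rw [hunion]; trivial
    obtain ⟨E, hE, hxE⟩ := this
    have : x ∈ ⋃₀ ((F ⟨E, hE⟩ : Set (Set X))) := by rw [hFunion]; exact hxE
    obtain ⟨A, hA, hxA⟩ := this
    have hAQ' : A ∈ Q' := Finset.mem_biUnion.2 ⟨⟨E, hE⟩, Finset.mem_attach _ _, hA⟩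
    exact ⟨A, by exact_mod_cast hAQ', hxA⟩
  · intro A hA; obtain ⟨E, hAE⟩ := hmem A hA; exact hFdiam E A hAE
  · intro A hA; obtain ⟨E, hAE⟩ := hmem A hA; exact ⟨E.1, E.2, hFsub E A hAE⟩
  · calc (Q'.card : ℝ) ≤ ∑ E ∈ Q.attach, ((F E).card : ℝ) := by
          exact_mod_cast Finset.card_biUnion_le
      _ ≤ ∑ _E ∈ Q.attach, (Cc * (2 * d / d') ^ atil) :=
          Finset.sum_le_sum fun E _ => hFcard E
      _ = Q.card * (Cc * (2 * d / d') ^ atil) := by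
          rw [Finset.sum_const, Finset.card_attach, nsmul_eq_mul]

set_option maxHeartbeats 1000000 in
/-- Existence of nested quasiuniform partitions in a bounded metric space of
Assouad dimension `< a`: if every ball of diameter `r` can be covered by at most
`C(r/s)^ã` balls of diameter `s < r` (with `ã < a`, `C ≥ 1`), then for every
`b ∈ (ã, a)` and every decreasing null sequence `s_n` there are nested finite
Borel partitions `(C_n^k)_{k<K_n}` of `X` with `diam C_n^k ≤ s_n` and
`K_n ≲ s_n^{−b}`; nested means each `C_{n+1}^k` is contained in exactly one
`C_n^{k'}`. -/
theorem stmt_6 {X : Type*} [MetricSpace X] [MeasurableSpace X] [BorelSpace X]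
    (hXbdd : Bornology.IsBounded (Set.univ : Set X))
    (a atil Cc : ℝ) (hatil : atil < a) (hCc : 1 ≤ Cc)
    (hcover : ∀ (x : X) (r s : ℝ), 0 < s → s < r →
      ∃ Y : Finset X, (Y.card : ℝ) ≤ Cc * (r / s) ^ atil ∧
        closedBall x (r / 2) ⊆ ⋃ y ∈ Y, closedBall y (s / 2))
    (b : ℝ) (hb1 : atil < b) (hb2 : b < a)
    (s : ℕ → ℝ) (hspos : ∀ n, 0 < s n) (hsanti : Antitone s)
    (hs0 : Tendsto s atTop (𝓝 0)) :
    ∃ (K : ℕ → ℕ) (C : (n : ℕ) → Fin (K n) → Set X) (C' : ℝ), 0 < C' ∧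
      (∀ n k, MeasurableSet (C n k)) ∧
      (∀ n, Pairwise (Function.onFun Disjoint (C n))) ∧
      (∀ n, (⋃ k, C n k) = Set.univ) ∧
      (∀ n k, diam (C n k) ≤ s n) ∧
      (∀ n, (K n : ℝ) ≤ C' * s n ^ (-b)) ∧
      (∀ n (k : Fin (K (n + 1))), ∃! k' : Fin (K n), C (n + 1) k ⊆ C n k') := by
  classical
  rcases isEmpty_or_nonempty X with hXe | hne
  · refine ⟨fun _ => 0, fun n k => k.elim0, 1, one_pos, ?_, ?_, ?_, ?_, ?_, ?_⟩
    · intro n k; exact k.elim0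
    · intro n k; exact k.elim0
    · intro n
      refine Set.eq_univ_of_forall fun x => (IsEmpty.false x).elim
    · intro n k; exact k.elim0
    · intro n
      have h := Real.rpow_nonneg (hspos n).le (-b)
      simpa using h
    · intro n k; exact k.elim0
  obtain ⟨x0⟩ := hne
  haveI : Nonempty X := ⟨x0⟩
  have hCc0 : 0 < Cc := lt_of_lt_of_le one_pos hCc
  -- `atil` must be nonnegative since the space is nonempty
  have hatil0 : 0 ≤ atil := by
    by_contra h
    push_neg at h
    have hatne : atil ≠ 0 := ne_of_lt h
    set T : ℝ := (2 * Cc) ^ (1 / (-atil) : ℝ) with hT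
    have h2Cc : (1:ℝ) < 2 * Cc := by linarith
    have hT1 : 1 < T := by
      rw [hT]
      rw [Real.one_lt_rpow_iff (by positivity)]
      exact Or.inl ⟨h2Cc, one_div_pos.2 (by linarith)⟩
    have hTpos : 0 < T := lt_trans one_pos hT1
    obtain ⟨Y, hYcard, hYcov⟩ := hcover x0 2 (2 / T) (div_pos two_pos hTpos)
      (div_lt_self two_pos hT1)
    have hx0 : x0 ∈ closedBall x0 (2/2) := mem_closedBall_self (by norm_num)
    have hx0' := hYcov hx0
    simp only [Set.mem_iUnion] at hx0'
    obtain ⟨y, hy, -⟩ := hx0'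
    have h1le : (1 : ℝ) ≤ Y.card := by
      exact_mod_cast Nat.one_le_iff_ne_zero.2 (Finset.card_ne_zero_of_mem hy)
    have hval : 2 / (2 / T) = T := by field_simp
    rw [hval] at hYcard
    have hTatil : T ^ atil = (2*Cc)⁻¹ := by
      rw [hT, ← Real.rpow_mul (by positivity)]
      have : 1 / (-atil) * atil = -1 := by field_simp
      rw [this, Real.rpow_neg_one]
    have hle : (1:ℝ) ≤ Cc * (2*Cc)⁻¹ := by
      rw [← hTatil]; exact le_trans h1le hYcard
    have heq : Cc * (2*Cc)⁻¹ = 1/2 := by field_simp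
    rw [heq] at hle; linarith
  have hb0 : 0 < b := lt_of_le_of_lt hatil0 hb1
  have hba : 0 < b - atil := by linarith
  -- the contraction ratio θ
  have hMpos : (0:ℝ) < Cc * 2 ^ atil := by positivity
  set θ : ℝ := min (1/2) ((Cc * 2 ^ atil) ^ (-(1/(b - atil)) : ℝ)) with hθdef
  have hθ : 0 < θ := lt_min (by norm_num) (Real.rpow_pos_of_pos hMpos _)
  have hθlt1 : θ < 1 := lt_of_le_of_lt (min_le_left _ _) (by norm_num)
  have hθle1 : θ ≤ 1 := hθlt1.le
  have hθkey : Cc * (2/θ) ^ atil ≤ θ ^ (-b) := by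
    have h1 : θ ^ (b - atil) ≤ (Cc * 2 ^ atil)⁻¹ := by
      calc θ ^ (b - atil) ≤ ((Cc * 2 ^ atil) ^ (-(1/(b-atil)) : ℝ)) ^ (b - atil) :=
            Real.rpow_le_rpow hθ.le (min_le_right _ _) hba.le
        _ = (Cc * 2 ^ atil) ^ ((-(1/(b-atil))) * (b-atil)) := (Real.rpow_mul hMpos.le _ _).symm
        _ = (Cc * 2 ^ atil) ^ (-1 : ℝ) := by congr 1; field_simp
        _ = (Cc * 2 ^ atil)⁻¹ := Real.rpow_neg_one _
    have h2 : Cc * 2 ^ atil ≤ θ ^ (atil - b) := by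
      have hθb : 0 < θ ^ (b - atil) := Real.rpow_pos_of_pos hθ _
      have h3 : (Cc * 2 ^ atil)⁻¹⁻¹ ≤ (θ ^ (b - atil))⁻¹ := by
        exact inv_anti₀ hθb h1
      rw [inv_inv] at h3
      calc Cc * 2 ^ atil ≤ (θ ^ (b - atil))⁻¹ := h3
        _ = θ ^ (-(b - atil)) := (Real.rpow_neg hθ.le _).symm
        _ = θ ^ (atil - b) := by ring_nf
    rw [Real.div_rpow (by norm_num) hθ.le, ← mul_div_assoc]
    have hrw : θ ^ (-b) = θ ^ (atil - b) / θ ^ atil := by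
      rw [← Real.rpow_sub hθ]; congr 1; ring
    rw [hrw]
    gcongr
  -- geometric scales
  set δ : ℕ → ℝ := fun m => s 0 * θ ^ m with hδdef
  have hδpos : ∀ m, 0 < δ m := fun m => mul_pos (hspos 0) (pow_pos hθ m)
  have hδsucc : ∀ m, δ (m+1) = δ m * θ := by
    intro m; simp only [hδdef, pow_succ]; ring
  have hδle : ∀ m, δ (m+1) ≤ δ m := by
    intro m; rw [hδsucc m]
    nlinarith [hδpos m, hθ, hθle1]
  -- base partition at scale `s 0`
  set D1 : ℝ := max (diam (Set.univ : Set X)) (s 0) with hD1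
  have hgood1 : GoodPart D1 ({Set.univ} : Finset (Set X)) := by
    refine ⟨?_, ?_, ?_, ?_, ?_⟩
    · intro A hA; rw [Finset.mem_singleton] at hA; subst hA; exact MeasurableSet.univ
    · intro A hA; rw [Finset.mem_singleton] at hA; subst hA; exact Set.univ_nonempty
    · simp only [Finset.coe_singleton]
      exact Set.pairwiseDisjoint_singleton _ _
    · simp
    · intro A hA; rw [Finset.mem_singleton] at hA; subst hA; exact le_max_left _ _
  obtain ⟨Q0, hQ0good, -, hQ0card⟩ := refine_part hXbdd atil Cc hcover D1 (s 0)
    (hspos 0) (le_max_right _ _) {Set.univ} hgood1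
  set B : ℝ := max 1 (Cc * (2 * D1 / s 0) ^ atil) with hB
  have hB1 : 1 ≤ B := le_max_left _ _
  have hBpos : 0 < B := lt_of_lt_of_le one_pos hB1
  have hQ0card' : ((Q0.card : ℝ)) ≤ B := by
    calc (Q0.card : ℝ) ≤ ({Set.univ} : Finset (Set X)).card * (Cc * (2 * D1 / s 0) ^ atil) :=
          hQ0card
      _ = Cc * (2 * D1 / s 0) ^ atil := by simp
      _ ≤ B := le_max_right _ _
  -- the recursion step
  have hstep : ∀ m (Q : Finset (Set X)), ∃ Q' : Finset (Set X), GoodPart (δ m) Q →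
      (GoodPart (δ (m+1)) Q' ∧ (∀ A ∈ Q', ∃ E ∈ Q, A ⊆ E) ∧
       (Q'.card : ℝ) ≤ Q.card * (Cc * (2/θ) ^ atil)) := by
    intro m Q
    by_cases hQ : GoodPart (δ m) Q
    · obtain ⟨Q', h1, h2, h3⟩ := refine_part hXbdd atil Cc hcover (δ m) (δ (m+1))
        (hδpos (m+1)) (hδle m) Q hQ
      refine ⟨Q', fun _ => ⟨h1, h2, ?_⟩⟩
      have hratio : 2 * δ m / δ (m+1) = 2 / θ := by
        rw [hδsucc m, mul_comm 2 (δ m), mul_div_mul_left _ _ (ne_of_gt (hδpos m))]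
      rwa [hratio] at h3
    · exact ⟨∅, fun h => absurd h hQ⟩
  choose next hnext using hstep
  set P : ℕ → Finset (Set X) := fun m => Nat.rec Q0 next m with hPdef
  have hPzero : P 0 = Q0 := rfl
  have hPsucc : ∀ m, P (m+1) = next m (P m) := fun m => rfl
  have hθpow : ∀ m, (0:ℝ) < θ ^ m := fun m => pow_pos hθ m
  have hPmain : ∀ m, GoodPart (δ m) (P m) ∧ ((P m).card : ℝ) ≤ B * ((θ ^ m : ℝ)) ^ (-b) := by
    intro m
    induction m with
    | zero =>
      constructor
      · have hδ0 : δ 0 = s 0 := by simp [hδdef]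
        rw [hPzero, hδ0]; exact hQ0good
      · rw [hPzero]
        simpa using hQ0card'
    | succ m ih =>
      obtain ⟨h1, h2, h3⟩ := hnext m (P m) ih.1
      refine ⟨by rwa [hPsucc m], ?_⟩
      rw [hPsucc m]
      calc ((next m (P m)).card : ℝ) ≤ (P m).card * (Cc * (2/θ) ^ atil) := h3
        _ ≤ (B * (θ ^ m : ℝ) ^ (-b)) * θ ^ (-b) := by
            apply mul_le_mul ih.2 hθkey ?_ ?_
            · positivity
            · have := Real.rpow_nonneg (hθpow m).le (-b)
              positivity
        _ = B * ((θ ^ (m+1) : ℝ)) ^ (-b) := by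
            rw [pow_succ, Real.mul_rpow (hθpow m).le hθ.le]; ring
  have hPref : ∀ m, ∀ A ∈ P (m+1), ∃ E ∈ P m, A ⊆ E := by
    intro m
    have := (hnext m (P m) (hPmain m).1).2.1
    rwa [← hPsucc m] at this
  have hchain : ∀ k m, ∀ A ∈ P (m + k), ∃ E ∈ P m, A ⊆ E := by
    intro k
    induction k with
    | zero => intro m A hA; exact ⟨A, hA, subset_rfl⟩
    | succ k ih =>
      intro m A hA
      obtain ⟨E', hE', hAE'⟩ := hPref (m+k) A hA
      obtain ⟨E, hE, hEE⟩ := ih m E' hE'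
      exact ⟨E, hE, hAE'.trans hEE⟩
  -- choice of refinement level for each n
  have hex : ∀ n, ∃ m, δ m ≤ s n := by
    intro n
    have hθt : Tendsto (fun m : ℕ => θ ^ m) atTop (𝓝 0) :=
      tendsto_pow_atTop_nhds_zero_of_lt_one hθ.le hθlt1
    have hδt : Tendsto δ atTop (𝓝 0) := by
      have := hθt.const_mul (s 0)
      simpa [hδdef] using this
    have := hδt.eventually_lt_const (hspos n)
    obtain ⟨m, hm⟩ := this.exists
    exact ⟨m, hm.le⟩
  set mf : ℕ → ℕ := fun n => Nat.find (hex n) with hmf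
  have hmfle : ∀ n, δ (mf n) ≤ s n := fun n => Nat.find_spec (hex n)
  have hmfmono : Monotone mf := by
    apply monotone_nat_of_le_succ
    intro n
    exact Nat.find_min' (hex n) (le_trans (hmfle (n+1)) (hsanti (Nat.le_succ n)))
  -- the final data
  refine ⟨fun n => (P (mf n)).card, fun n k => ((P (mf n)).equivFin.symm k : Set X),
    B * s 0 ^ b * θ ^ (-b), ?_, ?_, ?_, ?_, ?_, ?_, ?_⟩
  · have h1 : (0:ℝ) < s 0 ^ b := Real.rpow_pos_of_pos (hspos 0) _
    have h2 : (0:ℝ) < θ ^ (-b) := Real.rpow_pos_of_pos hθ _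
    positivity
  · intro n k
    exact (hPmain (mf n)).1.1 _ ((P (mf n)).equivFin.symm k).2
  · intro n k k' hkk
    have hne' : ((P (mf n)).equivFin.symm k : Set X) ≠ ((P (mf n)).equivFin.symm k' : Set X) := by
      intro h
      exact hkk ((P (mf n)).equivFin.symm.injective (Subtype.ext h))
    exact (hPmain (mf n)).1.2.2.1 (by exact_mod_cast ((P (mf n)).equivFin.symm k).2)
      (by exact_mod_cast ((P (mf n)).equivFin.symm k').2) hne'
  · intro n
    apply Set.eq_univ_of_forall
    intro x
    have hx : x ∈ ⋃₀ ((P (mf n) : Set (Set X))) := by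
      rw [(hPmain (mf n)).1.2.2.2.1]; trivial
    obtain ⟨E, hE, hxE⟩ := hx
    refine Set.mem_iUnion.2 ⟨(P (mf n)).equivFin ⟨E, hE⟩, ?_⟩
    simpa using hxE
  · intro n k
    exact le_trans ((hPmain (mf n)).1.2.2.2.2 _ ((P (mf n)).equivFin.symm k).2) (hmfle n)
  · intro n
    show ((P (mf n)).card : ℝ) ≤ B * s 0 ^ b * θ ^ (-b) * s n ^ (-b)
    have hsid : (s n / s 0) ^ (-b) = s n ^ (-b) * s 0 ^ b := by
      rw [Real.div_rpow (hspos n).le (hspos 0).le, Real.rpow_neg (hspos 0).le, div_eq_mul_inv, inv_inv]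
    have hcard := (hPmain (mf n)).2
    rcases Nat.eq_zero_or_pos (mf n) with h0 | hposn
    · rw [h0] at hcard ⊢
      simp only [pow_zero, Real.one_rpow, mul_one] at hcard
      have h1 : (1:ℝ) ≤ θ ^ (-b) :=
        Real.one_le_rpow_of_pos_of_le_one_of_nonpos hθ hθle1 (by linarith)
      have h2 : (1:ℝ) ≤ (s n / s 0) ^ (-b) := by
        apply Real.one_le_rpow_of_pos_of_le_one_of_nonpos
        · exact div_pos (hspos n) (hspos 0)
        · exact div_le_one_of_le₀ (hsanti (Nat.zero_le n)) (hspos 0).le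
        · linarith
      have h3 : (1:ℝ) ≤ θ ^ (-b) * ((s n / s 0) ^ (-b)) := by nlinarith
      calc ((P 0).card : ℝ) ≤ B := hcard
        _ ≤ B * (θ ^ (-b) * ((s n / s 0) ^ (-b))) := le_mul_of_one_le_right hBpos.le h3
        _ = B * s 0 ^ b * θ ^ (-b) * s n ^ (-b) := by rw [hsid]; ring
    · obtain ⟨m, hm⟩ : ∃ m, mf n = m + 1 := ⟨mf n - 1, (Nat.succ_pred_eq_of_pos hposn).symm⟩
      have hmlt : m < mf n := by rw [hm]; exact Nat.lt_succ_self m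
      have hmin : ¬ δ m ≤ s n := Nat.find_min (hex n) hmlt
      push_neg at hmin
      have hlow : θ * (s n / s 0) ≤ (θ ^ (mf n) : ℝ) := by
        rw [hm, pow_succ, mul_comm (θ ^ m) θ]
        have : s n / s 0 ≤ θ ^ m := by
          rw [div_le_iff₀ (hspos 0)]
          have : s n < s 0 * θ ^ m := hmin
          linarith [this]
        nlinarith [hθ]
      have hlowpos : 0 < θ * (s n / s 0) := by
        have := div_pos (hspos n) (hspos 0); positivity
      have hkey2 : ((θ ^ (mf n) : ℝ)) ^ (-b) ≤ (θ * (s n / s 0)) ^ (-b) :=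
        Real.rpow_le_rpow_of_nonpos hlowpos hlow (by linarith)
      have hprod : (θ * (s n / s 0)) ^ (-b) = θ ^ (-b) * (s n / s 0) ^ (-b) :=
        Real.mul_rpow hθ.le (div_pos (hspos n) (hspos 0)).le
      calc ((P (mf n)).card : ℝ) ≤ B * ((θ ^ (mf n) : ℝ)) ^ (-b) := hcard
        _ ≤ B * ((θ * (s n / s 0)) ^ (-b)) := by nlinarith [hkey2, hBpos]
        _ = B * s 0 ^ b * θ ^ (-b) * s n ^ (-b) := by rw [hprod, hsid]; ring
  · intro n k
    beta_reduce
    set A : Set X := ((P (mf (n+1))).equivFin.symm k : Set X) with hA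
    have hAmem : A ∈ P (mf (n+1)) := ((P (mf (n+1))).equivFin.symm k).2
    have hAne : A.Nonempty := (hPmain (mf (n+1))).1.2.1 A hAmem
    obtain ⟨kd, hkd⟩ := Nat.exists_eq_add_of_le (hmfmono (Nat.le_succ n))
    obtain ⟨E, hE, hAE⟩ : ∃ E ∈ P (mf n), A ⊆ E := by
      apply hchain kd (mf n)
      rw [← hkd]; exact hAmem
    have huniq : ∀ k1 k2 : Fin (P (mf n)).card,
        A ⊆ ((P (mf n)).equivFin.symm k1 : Set X) →
        A ⊆ ((P (mf n)).equivFin.symm k2 : Set X) → k1 = k2 := by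
      intro k1 k2 h1 h2
      by_contra hne12
      have hnes : ((P (mf n)).equivFin.symm k1 : Set X) ≠ ((P (mf n)).equivFin.symm k2 : Set X) := by
        intro h
        exact hne12 ((P (mf n)).equivFin.symm.injective (Subtype.ext h))
      have hd := (hPmain (mf n)).1.2.2.1
        (by exact_mod_cast ((P (mf n)).equivFin.symm k1).2)
        (by exact_mod_cast ((P (mf n)).equivFin.symm k2).2) hnes
      obtain ⟨y, hy⟩ := hAne
      exact (Set.disjoint_left.1 hd) (h1 hy) (h2 hy)
    refine ⟨(P (mf n)).equivFin ⟨E, hE⟩, ?_, ?_⟩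
    · simpa using hAE
    · intro k' hk'
      exact huniq k' ((P (mf n)).equivFin ⟨E, hE⟩) hk' (by simpa using hAE)
end

section
/- Let c, C > 0 and let E_n be nonnegative real random variables with E_n → ‖Aρ†‖ > 0 almost surely. Consider the functionals ℰ_n(ρ) = ‖Aρ‖ − E_n · log(C‖ρ‖) restricted to measures ρ with ‖Aρ‖ ≥ ‖ρ‖/C. Then almost surely there exist κ > 0 and a random index n₀ such that for all n ≥ n₀ and all ρ: ℰ_n(ρ) ≥ ‖ρ‖/κ − κ (equicoercivity). -/
open MeasureTheory Filter Topology

lemma aux_log_bound (x E C : ℝ) (hx : 0 ≤ x) (hE : 0 ≤ E) (hC : 0 < C) :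
    E * Real.log (C * x) ≤ x / (2 * C) + 2 * C ^ 2 * E ^ 2 := by
  rcases eq_or_lt_of_le hE with hE0 | hE
  · rw [← hE0]; simp; positivity
  rcases eq_or_lt_of_le hx with hx0 | hx
  · rw [← hx0]; simp; positivity
  have hs : 0 < 2 * C ^ 2 * E := by positivity
  have h1 : Real.log (C * x) =
      Real.log ((C * x) / (2 * C ^ 2 * E)) + Real.log (2 * C ^ 2 * E) := by
    rw [Real.log_div (by positivity) (by positivity)]; ring
  have h2 : Real.log ((C * x) / (2 * C ^ 2 * E)) ≤ (C * x) / (2 * C ^ 2 * E) - 1 :=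
    Real.log_le_sub_one_of_pos (by positivity)
  have h3 : Real.log (2 * C ^ 2 * E) ≤ 2 * C ^ 2 * E - 1 :=
    Real.log_le_sub_one_of_pos hs
  have key : E * ((C * x) / (2 * C ^ 2 * E)) = x / (2 * C) := by
    field_simp
  calc E * Real.log (C * x)
      = E * (Real.log ((C * x) / (2 * C ^ 2 * E)) + Real.log (2 * C ^ 2 * E)) := by rw [h1]
    _ ≤ E * (((C * x) / (2 * C ^ 2 * E) - 1) + (2 * C ^ 2 * E - 1)) := by
        apply mul_le_mul_of_nonneg_left (add_le_add h2 h3) hE.le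
    _ = E * ((C * x) / (2 * C ^ 2 * E)) + 2 * C ^ 2 * E ^ 2 - 2 * E := by ring
    _ = x / (2 * C) + 2 * C ^ 2 * E ^ 2 - 2 * E := by rw [key]
    _ ≤ x / (2 * C) + 2 * C ^ 2 * E ^ 2 := by linarith

/-- Equicoercivity of the PET energies: let `c, C > 0` and let `E_n ≥ 0` be random
variables with `E_n → ‖Aρ†‖ > 0` almost surely.  Consider the functionals
`ℰ_n(ρ) = ‖Aρ‖ − E_n log(C‖ρ‖)` restricted to `ρ` with `‖Aρ‖ ≥ ‖ρ‖/C`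
(abstracted here via `x = ‖ρ‖ ≥ 0` and `a = ‖Aρ‖ ≥ x/C`).  Then almost surely
there exist `κ > 0` and an index `n₀` such that for all `n ≥ n₀` and all such `ρ`:
`ℰ_n(ρ) ≥ ‖ρ‖/κ − κ`. -/
theorem stmt_18 {Ω : Type*} [MeasurableSpace Ω] (P : Measure Ω) [IsProbabilityMeasure P]
    (c C : ℝ) (hc : 0 < c) (hC : 0 < C)
    (En : ℕ → Ω → ℝ) (hEnonneg : ∀ n ω, 0 ≤ En n ω)
    (L : ℝ) (hL : 0 < L)
    (hconv : ∀ᵐ ω ∂P, Tendsto (fun n => En n ω) atTop (𝓝 L)) :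
    ∀ᵐ ω ∂P, ∃ κ : ℝ, 0 < κ ∧ ∃ n₀ : ℕ, ∀ n ≥ n₀,
      ∀ x a : ℝ, 0 ≤ x → x / C ≤ a →
        a - En n ω * Real.log (C * x) ≥ x / κ - κ := by
  filter_upwards [hconv] with ω hω
  have hev : ∀ᶠ n in atTop, En n ω ≤ L + 1 :=
    hω.eventually (eventually_le_nhds (by linarith))
  obtain ⟨n₀, hn₀⟩ := eventually_atTop.1 hev
  refine ⟨max (2 * C) (2 * C ^ 2 * (L + 1) ^ 2 + 1), lt_of_lt_of_le (by positivity)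
    (le_max_right _ _), n₀, fun n hn x a hx hxa => ?_⟩
  set κ := max (2 * C) (2 * C ^ 2 * (L + 1) ^ 2 + 1) with hκ
  have hκ1 : 2 * C ≤ κ := le_max_left _ _
  have hκ2 : 2 * C ^ 2 * (L + 1) ^ 2 + 1 ≤ κ := le_max_right _ _
  have hκpos : 0 < κ := lt_of_lt_of_le (by positivity) hκ1
  have hE := hEnonneg n ω
  have hEle : En n ω ≤ L + 1 := hn₀ n hn
  have h1 : En n ω * Real.log (C * x) ≤ x / (2 * C) + 2 * C ^ 2 * (En n ω) ^ 2 :=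
    aux_log_bound x (En n ω) C hx hE hC
  have hE2 : (En n ω) ^ 2 ≤ (L + 1) ^ 2 := by nlinarith
  have hdiv : x / κ ≤ x / (2 * C) :=
    div_le_div_of_nonneg_left hx (by positivity) hκ1
  have hxC : x / C = x / (2 * C) + x / (2 * C) := by field_simp; ring
  have : a - En n ω * Real.log (C * x) ≥ x / (2 * C) - 2 * C ^ 2 * (L + 1) ^ 2 := by
    nlinarith
  calc x / κ - κ ≤ x / (2 * C) - (2 * C ^ 2 * (L + 1) ^ 2 + 1) := by
        exact sub_le_sub hdiv hκ2
    _ ≤ x / (2 * C) - 2 * C ^ 2 * (L + 1) ^ 2 := by linarith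
    _ ≤ a - En n ω * Real.log (C * x) := this
end
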